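/- arXiv:2304.11288 — 6 statements merged into one kernel-verified Lean document; each statement's English description precedes it below -/
import Mathlib

section
/- Discrete energy identity for Step I of the EOP-SAV/Crank–Nicolson scheme: Assume Δt > 0, elements φⁿ, φⁿ⁺¹, μ, w of H, real numbers Rⁿ, R̃ⁿ⁺¹, and a real number ℰ₁ > 0 satisfy the scheme equations (i) (φⁿ⁺¹ − φⁿ)/Δt = −G μ, (ii) μ = (1/2)·L φⁿ⁺¹ + (1/2)·L φⁿ + ((R̃ⁿ⁺¹ + Rⁿ)/(2·√ℰ₁))·w, (iii) (R̃ⁿ⁺¹ − Rⁿ)/Δt = (1/(2·√ℰ₁))·⟨w, (φⁿ⁺¹ − φⁿ)/Δt⟩. Then (1/2)⟨L φⁿ⁺¹, φⁿ⁺¹⟩ + (R̃ⁿ⁺¹)² − (1/2)⟨L φⁿ, φⁿ⟩ − (Rⁿ)² = −Δt·⟨G μ, μ⟩ ≤ 0. -/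
/-!
Pairing the chemical-potential equation with the increment `φⁿ⁺¹ - φⁿ` makes the
Crank–Nicolson average of `L` telescope into the change of `½⟪L φ, φ⟫` (by symmetry of `L`),
while the auxiliary-variable equation turns the SAV term into `(R̃ⁿ⁺¹)² - (Rⁿ)²`.
The first scheme equation then identifies that pairing with `-Δt ⟪G μ, μ⟫`.
-/

open RealInnerProductSpace

section

variable {H : Type*} [NormedAddCommGroup H] [InnerProductSpace ℝ H]

theorem LinearMap.IsSymmetric.inner_average_sub {T : H →ₗ[ℝ] H} (hT : T.IsSymmetric)
    (x y : H) :
    ⟪(1/2 : ℝ) • T x + (1/2 : ℝ) • T y, x - y⟫ = (1/2) * ⟪T x, x⟫ - (1/2) * ⟪T y, y⟫ := by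
  have hcross : ⟪T y, x⟫ = ⟪T x, y⟫ := by rw [hT y x, real_inner_comm]
  simp only [inner_add_left, real_inner_smul_left, inner_sub_right, hcross]
  ring

theorem LinearMap.IsSymmetric.sav_energy_sub_eq_inner {T : H →ₗ[ℝ] H} (hT : T.IsSymmetric)
    (x y w : H) {Rt Rn c : ℝ} (hR : Rt - Rn = c * ⟪w, x - y⟫) :
    (1/2) * ⟪T x, x⟫ + Rt ^ 2 - (1/2) * ⟪T y, y⟫ - Rn ^ 2
      = ⟪(1/2 : ℝ) • T x + (1/2 : ℝ) • T y + ((Rt + Rn) * c) • w, x - y⟫ := by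
  have hsq : Rt ^ 2 - Rn ^ 2 = (Rt + Rn) * c * ⟪w, x - y⟫ := by
    rw [mul_assoc, ← hR]; ring
  rw [inner_add_left, hT.inner_average_sub, real_inner_smul_left]
  linarith

end

theorem eop_sav_cn_stepI_energy_identity_general
    {H : Type*} [NormedAddCommGroup H] [InnerProductSpace ℝ H]
    (L G : H →L[ℝ] H)
    (hLsym : ∀ u v : H, ⟪L u, v⟫ = ⟪u, L v⟫)
    (hGpos : ∀ v : H, 0 ≤ ⟪G v, v⟫)
    (dt : ℝ) (hdt : 0 < dt)
    (φn φn1 μ w : H) (Rn Rt E1 : ℝ)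
    (h1 : dt⁻¹ • (φn1 - φn) = -(G μ))
    (h2 : μ = (1/2 : ℝ) • L φn1 + (1/2 : ℝ) • L φn
          + ((Rt + Rn) / (2 * Real.sqrt E1)) • w)
    (h3 : (Rt - Rn) / dt = (1 / (2 * Real.sqrt E1)) * ⟪w, dt⁻¹ • (φn1 - φn)⟫) :
    (1/2) * ⟪L φn1, φn1⟫ + Rt ^ 2 - (1/2) * ⟪L φn, φn⟫ - Rn ^ 2
      = -dt * ⟪G μ, μ⟫ ∧ -dt * ⟪G μ, μ⟫ ≤ 0 := by
  have hincr : φn1 - φn = -dt • G μ := by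
    rw [(inv_smul_eq_iff₀ hdt.ne').mp h1, smul_neg, neg_smul]
  have hR : Rt - Rn = 1 / (2 * Real.sqrt E1) * ⟪w, φn1 - φn⟫ := by
    rw [real_inner_smul_right, div_eq_iff hdt.ne'] at h3
    rw [h3]; field_simp
  have hL : (L : H →ₗ[ℝ] H).IsSymmetric := hLsym
  refine ⟨?_, neg_mul dt _ ▸ neg_nonpos.mpr (mul_nonneg hdt.le (hGpos μ))⟩
  refine (hL.sav_energy_sub_eq_inner φn1 φn w hR).trans ?_
  rw [ContinuousLinearMap.coe_coe, ← div_eq_mul_one_div, ← h2, hincr, real_inner_smul_right,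
    real_inner_comm]

/-- Discrete energy identity for Step I of the EOP-SAV/Crank–Nicolson scheme. -/
theorem eop_sav_cn_stepI_energy_identity
    {H : Type*} [NormedAddCommGroup H] [InnerProductSpace ℝ H]
    (L G : H →L[ℝ] H)
    (hLsym : ∀ u v : H, ⟪L u, v⟫ = ⟪u, L v⟫)
    (hLpos : ∀ v : H, 0 ≤ ⟪L v, v⟫)
    (hGpos : ∀ v : H, 0 ≤ ⟪G v, v⟫)
    (dt : ℝ) (hdt : 0 < dt)
    (φn φn1 μ w : H) (Rn Rt E1 : ℝ) (hE1 : 0 < E1)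
    (h1 : dt⁻¹ • (φn1 - φn) = -(G μ))
    (h2 : μ = (1/2 : ℝ) • L φn1 + (1/2 : ℝ) • L φn
          + ((Rt + Rn) / (2 * Real.sqrt E1)) • w)
    (h3 : (Rt - Rn) / dt = (1 / (2 * Real.sqrt E1)) * ⟪w, dt⁻¹ • (φn1 - φn)⟫) :
    (1/2) * ⟪L φn1, φn1⟫ + Rt ^ 2 - (1/2) * ⟪L φn, φn⟫ - Rn ^ 2
      = -dt * ⟪G μ, μ⟫ ∧ -dt * ⟪G μ, μ⟫ ≤ 0 :=
  eop_sav_cn_stepI_energy_identity_general L G hLsym hGpos dt hdt φn φn1 μ w Rn Rt E1 h1 h2 h3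
end

section
/- Well-definedness of the quantity sⁿ⁺¹ in the EOP-SAV/CN scheme: Under the same scheme equations (i) (φⁿ⁺¹ − φⁿ)/Δt = −G μ, (ii) μ = (1/2)·L φⁿ⁺¹ + (1/2)·L φⁿ + ((R̃ⁿ⁺¹ + Rⁿ)/(2·√ℰ₁))·w, (iii) (R̃ⁿ⁺¹ − Rⁿ)/Δt = (1/(2·√ℰ₁))·⟨w, (φⁿ⁺¹ − φⁿ)/Δt⟩ with Δt > 0 and ℰ₁ > 0, the radicand defining sⁿ⁺¹ satisfies (1/2)⟨L φⁿ, φⁿ⟩ − (1/2)⟨L φⁿ⁺¹, φⁿ⁺¹⟩ + (Rⁿ)² = (R̃ⁿ⁺¹)² + Δt·⟨G μ, μ⟩ ≥ 0; in particular it is non-negative and |R̃ⁿ⁺¹| ≤ √((1/2)⟨L φⁿ, φⁿ⟩ − (1/2)⟨L φⁿ⁺¹, φⁿ⁺¹⟩ + (Rⁿ)²). -/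
open RealInnerProductSpace

/-!
Test equation (ii) against `φⁿ⁺¹ - φⁿ`. Since `L` is self-adjoint the cross terms of the
Crank–Nicolson average cancel, leaving `½⟪L φⁿ⁺¹, φⁿ⁺¹⟫ - ½⟪L φⁿ, φⁿ⟫`, and by (iii) the SAV term
becomes `(R̃ⁿ⁺¹ + Rⁿ)(R̃ⁿ⁺¹ - Rⁿ)`. By (i) the same pairing equals `-Δt ⟪G μ, μ⟫ ≤ 0`, which is the
energy identity; the radicand is then `(R̃ⁿ⁺¹)²` plus something non-negative.
-/

section EnergyIdentity

variable {H : Type*} [NormedAddCommGroup H] [InnerProductSpace ℝ H]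

theorem LinearMap.IsSymmetric.inner_add_sub {T : H →ₗ[ℝ] H} (hT : T.IsSymmetric) (x y : H) :
    ⟪T x + T y, x - y⟫ = ⟪T x, x⟫ - ⟪T y, y⟫ := by
  have hcross : ⟪T x, y⟫ = ⟪T y, x⟫ := by rw [hT, real_inner_comm]
  rw [inner_add_left, inner_sub_right, inner_sub_right, hcross]
  ring

theorem inner_crankNicolson_sub {T : H →ₗ[ℝ] H} (hT : T.IsSymmetric) (x y w : H)
    (r s d : ℝ) (hrs : r - s = ⟪w, x - y⟫ / d) :
    ⟪(1/2 : ℝ) • T x + (1/2 : ℝ) • T y + ((r + s) / d) • w, x - y⟫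
      = (1/2) * ⟪T x, x⟫ - (1/2) * ⟪T y, y⟫ + (r ^ 2 - s ^ 2) := by
  have hsav : ⟪((r + s) / d) • w, x - y⟫ = r ^ 2 - s ^ 2 := by
    rw [real_inner_smul_left, div_mul_eq_mul_div, mul_div_assoc, ← hrs]
    ring
  rw [inner_add_left, ← smul_add, real_inner_smul_left, hT.inner_add_sub, hsav]
  ring

theorem nonneg_and_abs_le_sqrt_of_eq_sq_add {a r b : ℝ} (h : a = r ^ 2 + b) (hb : 0 ≤ b) :
    0 ≤ a ∧ |r| ≤ Real.sqrt a :=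
  ⟨by rw [h]; positivity, Real.abs_le_sqrt (by linarith)⟩

end EnergyIdentity

theorem eop_sav_cn_radicand_nonneg_general
    {H : Type*} [NormedAddCommGroup H] [InnerProductSpace ℝ H]
    (L G : H →L[ℝ] H)
    (hLsym : ∀ u v : H, ⟪L u, v⟫ = ⟪u, L v⟫)
    (hGpos : ∀ v : H, 0 ≤ ⟪G v, v⟫)
    (dt : ℝ) (hdt : 0 < dt)
    (φn φn1 μ w : H) (Rn Rt E1 : ℝ)
    (h1 : dt⁻¹ • (φn1 - φn) = -(G μ))
    (h2 : μ = (1/2 : ℝ) • L φn1 + (1/2 : ℝ) • L φn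
          + ((Rt + Rn) / (2 * Real.sqrt E1)) • w)
    (h3 : (Rt - Rn) / dt = (1 / (2 * Real.sqrt E1)) * ⟪w, dt⁻¹ • (φn1 - φn)⟫) :
    (1/2) * ⟪L φn, φn⟫ - (1/2) * ⟪L φn1, φn1⟫ + Rn ^ 2
        = Rt ^ 2 + dt * ⟪G μ, μ⟫ ∧
    0 ≤ (1/2) * ⟪L φn, φn⟫ - (1/2) * ⟪L φn1, φn1⟫ + Rn ^ 2 ∧
    |Rt| ≤ Real.sqrt ((1/2) * ⟪L φn, φn⟫ - (1/2) * ⟪L φn1, φn1⟫ + Rn ^ 2) := by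
  have hstep : φn1 - φn = -dt • G μ := by
    rw [neg_smul, ← smul_neg, ← h1, smul_inv_smul₀ hdt.ne']
  have hsav : Rt - Rn = ⟪w, φn1 - φn⟫ / (2 * Real.sqrt E1) := by
    rw [real_inner_smul_right] at h3
    field_simp at h3 ⊢
    linear_combination h3
  have hpair : ⟪μ, φn1 - φn⟫
      = (1/2) * ⟪L φn1, φn1⟫ - (1/2) * ⟪L φn, φn⟫ + (Rt ^ 2 - Rn ^ 2) := by
    rw [h2]
    exact inner_crankNicolson_sub (T := (L : H →ₗ[ℝ] H)) hLsym φn1 φn w Rt Rn _ hsav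
  have hdiss : ⟪μ, φn1 - φn⟫ = -(dt * ⟪G μ, μ⟫) := by
    rw [hstep, real_inner_smul_right, real_inner_comm]
    ring
  have henergy : (1/2) * ⟪L φn, φn⟫ - (1/2) * ⟪L φn1, φn1⟫ + Rn ^ 2
      = Rt ^ 2 + dt * ⟪G μ, μ⟫ := by
    linarith
  exact ⟨henergy, nonneg_and_abs_le_sqrt_of_eq_sq_add henergy (mul_nonneg hdt.le (hGpos μ))⟩

/-- Well-definedness of the quantity `sⁿ⁺¹` in the EOP-SAV/CN scheme:
the radicand is non-negative and bounds `|R̃ⁿ⁺¹|`. -/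
theorem eop_sav_cn_radicand_nonneg
    {H : Type*} [NormedAddCommGroup H] [InnerProductSpace ℝ H]
    (L G : H →L[ℝ] H)
    (hLsym : ∀ u v : H, ⟪L u, v⟫ = ⟪u, L v⟫)
    (hLpos : ∀ v : H, 0 ≤ ⟪L v, v⟫)
    (hGpos : ∀ v : H, 0 ≤ ⟪G v, v⟫)
    (dt : ℝ) (hdt : 0 < dt)
    (φn φn1 μ w : H) (Rn Rt E1 : ℝ) (hE1 : 0 < E1)
    (h1 : dt⁻¹ • (φn1 - φn) = -(G μ))
    (h2 : μ = (1/2 : ℝ) • L φn1 + (1/2 : ℝ) • L φn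
          + ((Rt + Rn) / (2 * Real.sqrt E1)) • w)
    (h3 : (Rt - Rn) / dt = (1 / (2 * Real.sqrt E1)) * ⟪w, dt⁻¹ • (φn1 - φn)⟫) :
    (1/2) * ⟪L φn, φn⟫ - (1/2) * ⟪L φn1, φn1⟫ + Rn ^ 2
        = Rt ^ 2 + dt * ⟪G μ, μ⟫ ∧
    0 ≤ (1/2) * ⟪L φn, φn⟫ - (1/2) * ⟪L φn1, φn1⟫ + Rn ^ 2 ∧
    |Rt| ≤ Real.sqrt ((1/2) * ⟪L φn, φn⟫ - (1/2) * ⟪L φn1, φn1⟫ + Rn ^ 2) :=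
  eop_sav_cn_radicand_nonneg_general L G hLsym hGpos dt hdt φn φn1 μ w Rn Rt E1 h1 h2 h3
end

section
/- Unconditional energy stability of the EOP-SAV/CN scheme (Theorem 3.2, modified energy): Assume Δt > 0, elements φⁿ, φⁿ⁺¹, μ, w of H, reals Rⁿ, R̃ⁿ⁺¹, ℰ₁ > 0 and ℰ₁′ > 0 satisfy (i) (φⁿ⁺¹ − φⁿ)/Δt = −G μ, (ii) μ = (1/2)·L φⁿ⁺¹ + (1/2)·L φⁿ + ((R̃ⁿ⁺¹ + Rⁿ)/(2·√ℰ₁))·w, (iii) (R̃ⁿ⁺¹ − Rⁿ)/Δt = (1/(2·√ℰ₁))·⟨w, (φⁿ⁺¹ − φⁿ)/Δt⟩. Define s := √((1/2)⟨L φⁿ, φⁿ⟩ − (1/2)⟨L φⁿ⁺¹, φⁿ⁺¹⟩ + (Rⁿ)²) and Rⁿ⁺¹ := min{s, √ℰ₁′}. Then (a) (1/2)⟨L φⁿ⁺¹, φⁿ⁺¹⟩ + (Rⁿ⁺¹)² ≤ (1/2)⟨L φⁿ, φⁿ⟩ + (Rⁿ)², i.e. the modified energy is non-increasing; and (b) (Rⁿ⁺¹)²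 ≤ ℰ₁′, i.e. the modified energy is bounded above by the original energy. -/
open RealInnerProductSpace

/-! Testing the chemical-potential equation (ii) with `φⁿ⁺¹ - φⁿ`: the Crank–Nicolson average of
the self-adjoint `L` turns the linear part into the difference of quadratic energies, and the
auxiliary equation (iii) turns the nonlinear part into `R̃² - Rⁿ²`. By (i) the same inner product
equals `-Δt ⟪G μ, μ⟫ ≤ 0`, so `½⟪L φⁿ⁺¹, φⁿ⁺¹⟫ + R̃² ≤ ½⟪L φⁿ, φⁿ⟫ + Rⁿ²`. Hence the radicand of
`s` dominates `R̃² ≥ 0`, and squaring the truncation `min s √ℰ₁'` gives the minimum of `s²`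
and `ℰ₁'`. -/

section CrankNicolson

variable {H : Type*} [NormedAddCommGroup H] [InnerProductSpace ℝ H]

theorem inner_midpoint_apply_sub_eq {L : H →L[ℝ] H} (hL : ∀ u v : H, ⟪L u, v⟫ = ⟪u, L v⟫)
    (u v : H) :
    ⟪(1/2 : ℝ) • L u + (1/2 : ℝ) • L v, u - v⟫ = (1/2) * ⟪L u, u⟫ - (1/2) * ⟪L v, v⟫ := by
  simp only [inner_add_left, real_inner_smul_left, inner_sub_right]
  rw [hL u v, real_inner_comm u (L v)]
  ring

theorem inner_sub_nonpos_of_smul_sub_eq_neg {G : H →L[ℝ] H} (hG : ∀ v : H, 0 ≤ ⟪G v, v⟫)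
    {dt : ℝ} (hdt : 0 < dt) {u v μ : H} (h : dt⁻¹ • (u - v) = -(G μ)) : ⟪μ, u - v⟫ ≤ 0 := by
  have hstep : u - v = -(dt • G μ) := by
    rw [← smul_neg, ← h, smul_inv_smul₀ hdt.ne']
  rw [hstep, inner_neg_right, real_inner_smul_right, real_inner_comm]
  exact neg_nonpos.mpr (mul_nonneg hdt.le (hG μ))

theorem sav_inner_eq_sq_sub_sq {w d : H} {dt c Rt Rn : ℝ} (hdt : dt ≠ 0)
    (h : (Rt - Rn) / dt = (1 / c) * ⟪w, dt⁻¹ • d⟫) :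
    ⟪((Rt + Rn) / c) • w, d⟫ = Rt ^ 2 - Rn ^ 2 := by
  have hR : Rt - Rn = (1 / c) * ⟪w, d⟫ := by
    rw [real_inner_smul_right, div_eq_iff hdt] at h
    rw [h]
    field_simp
  rw [real_inner_smul_left, div_eq_mul_one_div, mul_assoc, ← hR]
  ring

theorem sav_cn_energy_le {L G : H →L[ℝ] H}
    (hLsym : ∀ u v : H, ⟪L u, v⟫ = ⟪u, L v⟫) (hGpos : ∀ v : H, 0 ≤ ⟪G v, v⟫)
    {dt : ℝ} (hdt : 0 < dt) {φn φn1 μ w : H} {Rn Rt s : ℝ}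
    (h1 : dt⁻¹ • (φn1 - φn) = -(G μ))
    (h2 : μ = (1/2 : ℝ) • L φn1 + (1/2 : ℝ) • L φn + ((Rt + Rn) / (2 * s)) • w)
    (h3 : (Rt - Rn) / dt = (1 / (2 * s)) * ⟪w, dt⁻¹ • (φn1 - φn)⟫) :
    (1/2) * ⟪L φn1, φn1⟫ + Rt ^ 2 ≤ (1/2) * ⟪L φn, φn⟫ + Rn ^ 2 := by
  have hdiss := inner_sub_nonpos_of_smul_sub_eq_neg hGpos hdt h1
  have hsav := sav_inner_eq_sq_sub_sq hdt.ne' h3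
  rw [h2, inner_add_left, inner_midpoint_apply_sub_eq hLsym, hsav] at hdiss
  linarith

end CrankNicolson

theorem sq_min_sqrt_sqrt {a b : ℝ} (ha : 0 ≤ a) (hb : 0 ≤ b) :
    min (Real.sqrt a) (Real.sqrt b) ^ 2 = min a b := by
  rw [← Real.sqrt_monotone.map_min, Real.sq_sqrt (le_min ha hb)]

theorem eop_sav_cn_unconditional_stability_general
    {H : Type*} [NormedAddCommGroup H] [InnerProductSpace ℝ H]
    (L G : H →L[ℝ] H)
    (hLsym : ∀ u v : H, ⟪L u, v⟫ = ⟪u, L v⟫)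
    (hGpos : ∀ v : H, 0 ≤ ⟪G v, v⟫)
    (dt : ℝ) (hdt : 0 < dt)
    (φn φn1 μ w : H) (Rn Rt E1 E1' : ℝ) (hE1' : 0 < E1')
    (h1 : dt⁻¹ • (φn1 - φn) = -(G μ))
    (h2 : μ = (1/2 : ℝ) • L φn1 + (1/2 : ℝ) • L φn
          + ((Rt + Rn) / (2 * Real.sqrt E1)) • w)
    (h3 : (Rt - Rn) / dt = (1 / (2 * Real.sqrt E1)) * ⟪w, dt⁻¹ • (φn1 - φn)⟫) :
    (1/2) * ⟪L φn1, φn1⟫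
        + (min (Real.sqrt ((1/2) * ⟪L φn, φn⟫ - (1/2) * ⟪L φn1, φn1⟫ + Rn ^ 2))
            (Real.sqrt E1')) ^ 2
      ≤ (1/2) * ⟪L φn, φn⟫ + Rn ^ 2 ∧
    (min (Real.sqrt ((1/2) * ⟪L φn, φn⟫ - (1/2) * ⟪L φn1, φn1⟫ + Rn ^ 2))
        (Real.sqrt E1')) ^ 2 ≤ E1' := by
  have henergy := sav_cn_energy_le hLsym hGpos hdt h1 h2 h3
  have hradicand : 0 ≤ (1/2) * ⟪L φn, φn⟫ - (1/2) * ⟪L φn1, φn1⟫ + Rn ^ 2 := by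
    nlinarith [sq_nonneg Rt]
  rw [sq_min_sqrt_sqrt hradicand hE1'.le]
  exact ⟨by linarith [min_le_left ((1/2) * ⟪L φn, φn⟫ - (1/2) * ⟪L φn1, φn1⟫ + Rn ^ 2) E1'],
    min_le_right _ _⟩

/-- Unconditional energy stability of the EOP-SAV/CN scheme
(Theorem 3.2, modified energy part). -/
theorem eop_sav_cn_unconditional_stability
    {H : Type*} [NormedAddCommGroup H] [InnerProductSpace ℝ H]
    (L G : H →L[ℝ] H)
    (hLsym : ∀ u v : H, ⟪L u, v⟫ = ⟪u, L v⟫)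
    (hLpos : ∀ v : H, 0 ≤ ⟪L v, v⟫)
    (hGpos : ∀ v : H, 0 ≤ ⟪G v, v⟫)
    (dt : ℝ) (hdt : 0 < dt)
    (φn φn1 μ w : H) (Rn Rt E1 E1' : ℝ) (hE1 : 0 < E1) (hE1' : 0 < E1')
    (h1 : dt⁻¹ • (φn1 - φn) = -(G μ))
    (h2 : μ = (1/2 : ℝ) • L φn1 + (1/2 : ℝ) • L φn
          + ((Rt + Rn) / (2 * Real.sqrt E1)) • w)
    (h3 : (Rt - Rn) / dt = (1 / (2 * Real.sqrt E1)) * ⟪w, dt⁻¹ • (φn1 - φn)⟫) :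
    (1/2) * ⟪L φn1, φn1⟫
        + (min (Real.sqrt ((1/2) * ⟪L φn, φn⟫ - (1/2) * ⟪L φn1, φn1⟫ + Rn ^ 2))
            (Real.sqrt E1')) ^ 2
      ≤ (1/2) * ⟪L φn, φn⟫ + Rn ^ 2 ∧
    (min (Real.sqrt ((1/2) * ⟪L φn, φn⟫ - (1/2) * ⟪L φn1, φn1⟫ + Rn ^ 2))
        (Real.sqrt E1')) ^ 2 ≤ E1' :=
  eop_sav_cn_unconditional_stability_general L G hLsym hGpos dt hdt φn φn1 μ w Rn Rt E1 E1' hE1' h1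
    h2 h3
end

section
/- Energy stability of the relaxed SAV/CN scheme: Assume Δt > 0, elements φⁿ, φⁿ⁺¹, μ, w of H, reals Rⁿ, R̃ⁿ⁺¹, ℰ₁ > 0 satisfy (i) (φⁿ⁺¹ − φⁿ)/Δt = −G μ, (ii) μ = (1/2)·L φⁿ⁺¹ + (1/2)·L φⁿ + ((R̃ⁿ⁺¹ + Rⁿ)/(2·√ℰ₁))·w, (iii) (R̃ⁿ⁺¹ − Rⁿ)/Δt = (1/(2·√ℰ₁))·⟨w, (φⁿ⁺¹ − φⁿ)/Δt⟩, and let η ∈ [0, 1] and Rⁿ⁺¹ be a real number with (Rⁿ⁺¹)² − (R̃ⁿ⁺¹)² ≤ Δt·η·⟨G μ, μ⟩. Then (1/2)⟨L φⁿ⁺¹, φⁿ⁺¹⟩ + (Rⁿ⁺¹)² − (1/2)⟨L φⁿ, φⁿ⟩ − (Rⁿ)² ≤ −(1 − η)·Δt·⟨G μ, μ⟩ ≤ 0. -/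
/-!
Pairing the chemical potential `μ` with the increment `φⁿ⁺¹ - φⁿ = -Δt • G μ` gives, by the
symmetry of `L` and the update rule for `R̃ⁿ⁺¹`, the unrelaxed energy law
`E(φⁿ⁺¹, R̃ⁿ⁺¹) - E(φⁿ, Rⁿ) = -Δt ⟪G μ, μ⟫`; the relaxation step gives back at most the
fraction `η` of this dissipation.
-/

open RealInnerProductSpace

section

variable {H : Type*} [NormedAddCommGroup H] [InnerProductSpace ℝ H]

/-- The modified energy of the scalar auxiliary variable method. -/
noncomputable def savEnergy (T : H →ₗ[ℝ] H) (φ : H) (R : ℝ) : ℝ :=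
  (1 / 2) * ⟪T φ, φ⟫ + R ^ 2

namespace LinearMap.IsSymmetric

variable {T : H →ₗ[ℝ] H}

theorem inner_midpoint_sub (hT : T.IsSymmetric) (a b : H) :
    ⟪(1 / 2 : ℝ) • T a + (1 / 2 : ℝ) • T b, a - b⟫ = (1 / 2) * ⟪T a, a⟫ - (1 / 2) * ⟪T b, b⟫ := by
  have hab : ⟪T a, b⟫ = ⟪T b, a⟫ := by rw [hT, real_inner_comm]
  simp only [inner_add_left, inner_sub_right, real_inner_smul_left, hab]
  ring

theorem inner_sav_potential_sub (hT : T.IsSymmetric) {a b w : H} {Ra Rb q : ℝ}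
    (hR : Ra - Rb = 1 / q * ⟪w, a - b⟫) :
    ⟪(1 / 2 : ℝ) • T a + (1 / 2 : ℝ) • T b + ((Ra + Rb) / q) • w, a - b⟫
      = savEnergy T a Ra - savEnergy T b Rb := by
  have hscalar : (Ra + Rb) / q * ⟪w, a - b⟫ = Ra ^ 2 - Rb ^ 2 := by
    linear_combination -(Ra + Rb) * hR
  rw [inner_add_left, hT.inner_midpoint_sub, real_inner_smul_left, hscalar, savEnergy, savEnergy]
  ring

end LinearMap.IsSymmetric

end

theorem rsav_cn_energy_stability_general
    {H : Type*} [NormedAddCommGroup H] [InnerProductSpace ℝ H]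
    (L G : H →L[ℝ] H)
    (hLsym : ∀ u v : H, ⟪L u, v⟫ = ⟪u, L v⟫)
    (hGpos : ∀ v : H, 0 ≤ ⟪G v, v⟫)
    (dt : ℝ) (hdt : 0 < dt)
    (φn φn1 μ w : H) (Rn Rt E1 : ℝ)
    (h1 : dt⁻¹ • (φn1 - φn) = -(G μ))
    (h2 : μ = (1/2 : ℝ) • L φn1 + (1/2 : ℝ) • L φn
          + ((Rt + Rn) / (2 * Real.sqrt E1)) • w)
    (h3 : (Rt - Rn) / dt = (1 / (2 * Real.sqrt E1)) * ⟪w, dt⁻¹ • (φn1 - φn)⟫)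
    (η : ℝ) (hη : η ∈ Set.Icc (0:ℝ) 1)
    (Rn1 : ℝ) (hrelax : Rn1 ^ 2 - Rt ^ 2 ≤ dt * η * ⟪G μ, μ⟫) :
    (1/2) * ⟪L φn1, φn1⟫ + Rn1 ^ 2 - (1/2) * ⟪L φn, φn⟫ - Rn ^ 2
      ≤ -(1 - η) * dt * ⟪G μ, μ⟫ ∧
    -(1 - η) * dt * ⟪G μ, μ⟫ ≤ 0 := by
  have hLsymm : (L : H →ₗ[ℝ] H).IsSymmetric := hLsym
  have hinc : φn1 - φn = dt • -(G μ) := (inv_smul_eq_iff₀ hdt.ne').1 h1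
  have hR : Rt - Rn = 1 / (2 * Real.sqrt E1) * ⟪w, φn1 - φn⟫ := by
    rw [real_inner_smul_right, div_eq_iff hdt.ne'] at h3
    rw [h3]
    field_simp
  have hdiss : savEnergy (L : H →ₗ[ℝ] H) φn1 Rt - savEnergy (L : H →ₗ[ℝ] H) φn Rn
      = -dt * ⟪G μ, μ⟫ := by
    have hpot := hLsymm.inner_sav_potential_sub hR
    rw [ContinuousLinearMap.coe_coe, ← h2] at hpot
    rw [← hpot, hinc, real_inner_smul_right, inner_neg_right, real_inner_comm]
    ring
  simp only [savEnergy, ContinuousLinearMap.coe_coe] at hdiss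
  have hdecay : 0 ≤ (1 - η) * dt * ⟪G μ, μ⟫ :=
    mul_nonneg (mul_nonneg (sub_nonneg.2 hη.2) hdt.le) (hGpos μ)
  constructor
  · linear_combination hdiss + hrelax
  · linarith

/-- Energy stability of the relaxed SAV/CN scheme. -/
theorem rsav_cn_energy_stability
    {H : Type*} [NormedAddCommGroup H] [InnerProductSpace ℝ H]
    (L G : H →L[ℝ] H)
    (hLsym : ∀ u v : H, ⟪L u, v⟫ = ⟪u, L v⟫)
    (hLpos : ∀ v : H, 0 ≤ ⟪L v, v⟫)
    (hGpos : ∀ v : H, 0 ≤ ⟪G v, v⟫)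
    (dt : ℝ) (hdt : 0 < dt)
    (φn φn1 μ w : H) (Rn Rt E1 : ℝ) (hE1 : 0 < E1)
    (h1 : dt⁻¹ • (φn1 - φn) = -(G μ))
    (h2 : μ = (1/2 : ℝ) • L φn1 + (1/2 : ℝ) • L φn
          + ((Rt + Rn) / (2 * Real.sqrt E1)) • w)
    (h3 : (Rt - Rn) / dt = (1 / (2 * Real.sqrt E1)) * ⟪w, dt⁻¹ • (φn1 - φn)⟫)
    (η : ℝ) (hη : η ∈ Set.Icc (0:ℝ) 1)
    (Rn1 : ℝ) (hrelax : Rn1 ^ 2 - Rt ^ 2 ≤ dt * η * ⟪G μ, μ⟫) :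
    (1/2) * ⟪L φn1, φn1⟫ + Rn1 ^ 2 - (1/2) * ⟪L φn, φn⟫ - Rn ^ 2
      ≤ -(1 - η) * dt * ⟪G μ, μ⟫ ∧
    -(1 - η) * dt * ⟪G μ, μ⟫ ≤ 0 :=
  rsav_cn_energy_stability_general L G hLsym hGpos dt hdt φn φn1 μ w Rn Rt E1 h1 h2 h3 η hη Rn1
    hrelax
end

section
/- Unconditional energy stability of the first-order SAV scheme (k = 1 case of scheme (2.2)): Assume Δt > 0, elements φⁿ, φⁿ⁺¹, μ, w of H, reals Rⁿ, Rⁿ⁺¹ and ℰ₁ > 0 satisfy (i) (φⁿ⁺¹ − φⁿ)/Δt = −G μ, (ii) μ = L φⁿ⁺¹ + (Rⁿ⁺¹/√ℰ₁)·w, (iii) (Rⁿ⁺¹ − Rⁿ)/Δt = (1/(2·√ℰ₁))·⟨w, (φⁿ⁺¹ − φⁿ)/Δt⟩. Then (1/2)⟨L φⁿ⁺¹, φⁿ⁺¹⟩ + (Rⁿ⁺¹)² − (1/2)⟨L φⁿ, φⁿ⟩ − (Rⁿ)² = −Δt·⟨G μ, μ⟩ − (1/2)⟨L(φⁿ⁺¹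 − φⁿ), φⁿ⁺¹ − φⁿ⟩ − (Rⁿ⁺¹ − Rⁿ)² ≤ 0; in particular the modified energy ℰⁿ = (1/2)⟨Lφⁿ, φⁿ⟩ + (Rⁿ)² is non-increasing. -/
/-!
Test the scheme with the natural multipliers: pair (i) with `μ` and (ii) with `φⁿ⁺¹ - φⁿ`, and
multiply (iii) by `2 Rⁿ⁺¹`. The nonlinear contributions `(Rⁿ⁺¹/√ℰ₁)⟪w, φⁿ⁺¹ - φⁿ⟫` then cancel
exactly, and the identities `2⟪L a, a - b⟫ = ⟪L a, a⟫ - ⟪L b, b⟫ + ⟪L (a - b), a - b⟫` and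
`2 a (a - b) = a² - b² + (a - b)²` turn what is left into the energy identity, whose right-hand
side is nonpositive by positivity of `G` and `L`.
-/

open RealInnerProductSpace

theorem LinearMap.IsSymmetric.inner_map_sub_eq {H : Type*} [NormedAddCommGroup H]
    [InnerProductSpace ℝ H] {T : H →ₗ[ℝ] H} (hT : T.IsSymmetric) (a b : H) :
    ⟪T a, a - b⟫ = (1/2) * ⟪T a, a⟫ - (1/2) * ⟪T b, b⟫ + (1/2) * ⟪T (a - b), a - b⟫ := by
  have hcross : ⟪T a, b⟫ = ⟪T b, a⟫ := by rw [hT, real_inner_comm]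
  simp only [map_sub, inner_sub_left, inner_sub_right, hcross]
  ring

theorem sav_bdf1_unconditional_stability_general
    {H : Type*} [NormedAddCommGroup H] [InnerProductSpace ℝ H]
    (L G : H →L[ℝ] H)
    (hLsym : ∀ u v : H, ⟪L u, v⟫ = ⟪u, L v⟫)
    (hLpos : ∀ v : H, 0 ≤ ⟪L v, v⟫)
    (hGpos : ∀ v : H, 0 ≤ ⟪G v, v⟫)
    (dt : ℝ) (hdt : 0 < dt)
    (φn φn1 μ w : H) (Rn Rn1 E1 : ℝ)
    (h1 : dt⁻¹ • (φn1 - φn) = -(G μ))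
    (h2 : μ = L φn1 + (Rn1 / Real.sqrt E1) • w)
    (h3 : (Rn1 - Rn) / dt = (1 / (2 * Real.sqrt E1)) * ⟪w, dt⁻¹ • (φn1 - φn)⟫) :
    (1/2) * ⟪L φn1, φn1⟫ + Rn1 ^ 2 - (1/2) * ⟪L φn, φn⟫ - Rn ^ 2
      = -dt * ⟪G μ, μ⟫ - (1/2) * ⟪L (φn1 - φn), φn1 - φn⟫ - (Rn1 - Rn) ^ 2 ∧
    -dt * ⟪G μ, μ⟫ - (1/2) * ⟪L (φn1 - φn), φn1 - φn⟫ - (Rn1 - Rn) ^ 2 ≤ 0 := by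
  set d := φn1 - φn
  have hd : d = dt • -(G μ) := (inv_smul_eq_iff₀ hdt.ne').1 h1
  have hR : Rn1 - Rn = (1 / (2 * Real.sqrt E1)) * ⟪w, d⟫ := by
    rw [real_inner_smul_right, div_eq_iff hdt.ne'] at h3
    rw [h3]
    field_simp
  have hdissipation : ⟪μ, d⟫ = -dt * ⟪G μ, μ⟫ := by
    rw [hd, real_inner_smul_right, inner_neg_right, real_inner_comm]
    ring
  have hsplit : ⟪μ, d⟫ = ⟪L φn1, d⟫ + 2 * Rn1 * (Rn1 - Rn) := by
    rw [h2, inner_add_left, real_inner_smul_left, hR]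
    ring
  have henergy := LinearMap.IsSymmetric.inner_map_sub_eq (T := (L : H →ₗ[ℝ] H)) hLsym φn1 φn
  refine ⟨?_, ?_⟩
  · simp only [ContinuousLinearMap.coe_coe] at henergy
    linear_combination hsplit.symm.trans hdissipation - henergy
  · linarith [mul_nonneg hdt.le (hGpos μ), hLpos d, sq_nonneg (Rn1 - Rn)]

/-- Unconditional energy stability of the first-order SAV scheme
(k = 1 case of scheme (2.2)). -/
theorem sav_bdf1_unconditional_stability
    {H : Type*} [NormedAddCommGroup H] [InnerProductSpace ℝ H]
    (L G : H →L[ℝ] H)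
    (hLsym : ∀ u v : H, ⟪L u, v⟫ = ⟪u, L v⟫)
    (hLpos : ∀ v : H, 0 ≤ ⟪L v, v⟫)
    (hGpos : ∀ v : H, 0 ≤ ⟪G v, v⟫)
    (dt : ℝ) (hdt : 0 < dt)
    (φn φn1 μ w : H) (Rn Rn1 E1 : ℝ) (hE1 : 0 < E1)
    (h1 : dt⁻¹ • (φn1 - φn) = -(G μ))
    (h2 : μ = L φn1 + (Rn1 / Real.sqrt E1) • w)
    (h3 : (Rn1 - Rn) / dt = (1 / (2 * Real.sqrt E1)) * ⟪w, dt⁻¹ • (φn1 - φn)⟫) :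
    (1/2) * ⟪L φn1, φn1⟫ + Rn1 ^ 2 - (1/2) * ⟪L φn, φn⟫ - Rn ^ 2
      = -dt * ⟪G μ, μ⟫ - (1/2) * ⟪L (φn1 - φn), φn1 - φn⟫ - (Rn1 - Rn) ^ 2 ∧
    -dt * ⟪G μ, μ⟫ - (1/2) * ⟪L (φn1 - φn), φn1 - φn⟫ - (Rn1 - Rn) ^ 2 ≤ 0 :=
  sav_bdf1_unconditional_stability_general L G hLsym hLpos hGpos dt hdt φn φn1 μ w Rn Rn1 E1 h1 h2
    h3
end

section
/- Unconditional energy stability of the second-order BDF2 SAV scheme (k = 2 case of scheme (2.2)): Assume Δt > 0, elements φⁿ⁻¹, φⁿ, φⁿ⁺¹, μ, w of H, reals Rⁿ⁻¹, Rⁿ, Rⁿ⁺¹ and ℰ₁ > 0 satisfy (i) ((3/2)φⁿ⁺¹ − 2φⁿ + (1/2)φⁿ⁻¹)/Δt = −G μ, (ii) μ = L φⁿ⁺¹ + (Rⁿ⁺¹/√ℰ₁)·w, (iii) ((3/2)Rⁿ⁺¹ − 2Rⁿ + (1/2)Rⁿ⁻¹)/Δt = (1/(2·√ℰ₁))·⟨w,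 ((3/2)φⁿ⁺¹ − 2φⁿ + (1/2)φⁿ⁻¹)/Δt⟩. Define the modified energy ℰⁿ := (1/4)[⟨Lφⁿ, φⁿ⟩ + ⟨L(2φⁿ − φⁿ⁻¹), 2φⁿ − φⁿ⁻¹⟩] + (1/2)[(Rⁿ)² + (2Rⁿ − Rⁿ⁻¹)²]. Then ℰⁿ⁺¹ − ℰⁿ = −Δt·⟨G μ, μ⟩ − (1/4)⟨L(φⁿ⁺¹ − 2φⁿ + φⁿ⁻¹), φⁿ⁺¹ − 2φⁿ + φⁿ⁻¹⟩ − (1/2)(Rⁿ⁺¹ − 2Rⁿ + Rⁿ⁻¹)² ≤ 0. -/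
/-!
Test the scheme with `μ`. Writing `δ = (3/2)φⁿ⁺¹ - 2φⁿ + (1/2)φⁿ⁻¹` and
`ρ = (3/2)Rⁿ⁺¹ - 2Rⁿ + (1/2)Rⁿ⁻¹`, equation (i) gives `⟪δ, μ⟫ = -Δt ⟪G μ, μ⟫`, while (ii) and
(iii) turn `⟪δ, μ⟫` into `⟪L δ, φⁿ⁺¹⟫ + 2 ρ Rⁿ⁺¹`: the SAV term `w` cancels. The BDF2 identity
`2⟪3a - 4b + c, a⟫ = ‖a‖² + ‖2a - b‖² - ‖b‖² - ‖2b - c‖² + ‖a - 2b + c‖²`, in the seminorm of `L`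
and in `ℝ`, rewrites both terms as the increment of the modified energy plus the numerical
dissipation, which is non-negative because `G` and `L` are.
-/

open RealInnerProductSpace

section

variable {H : Type*} [NormedAddCommGroup H] [InnerProductSpace ℝ H]

theorem LinearMap.IsSymmetric.bdf2_energy_sub {L : H →ₗ[ℝ] H} (hL : L.IsSymmetric) (a b c : H) :
    (1/4) * (⟪L a, a⟫ + ⟪L ((2:ℝ) • a - b), (2:ℝ) • a - b⟫)
      - (1/4) * (⟪L b, b⟫ + ⟪L ((2:ℝ) • b - c), (2:ℝ) • b - c⟫)
    = ⟪L ((3/2:ℝ) • a - (2:ℝ) • b + (1/2:ℝ) • c), a⟫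
      - (1/4) * ⟪L (a - (2:ℝ) • b + c), a - (2:ℝ) • b + c⟫ := by
  have hab : ⟪L a, b⟫ = ⟪L b, a⟫ := (hL a b).trans (real_inner_comm _ _)
  have hac : ⟪L a, c⟫ = ⟪L c, a⟫ := (hL a c).trans (real_inner_comm _ _)
  simp only [map_sub, map_add, map_smul, inner_sub_left, inner_add_left, real_inner_smul_left,
    inner_sub_right, inner_add_right, real_inner_smul_right]
  linear_combination (-1 : ℝ) * hab + (1/4 : ℝ) * hac

theorem bdf2_energy_sub_real (a b c : ℝ) :
    (1/2) * (a ^ 2 + (2 * a - b) ^ 2) - (1/2) * (b ^ 2 + (2 * b - c) ^ 2)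
      = 2 * ((3/2) * a - 2 * b + (1/2) * c) * a - (1/2) * (a - 2 * b + c) ^ 2 := by
  ring

theorem sav_discrete_energy_law {L G : H →L[ℝ] H} (hL : (L : H →ₗ[ℝ] H).IsSymmetric)
    {dt : ℝ} (hdt : dt ≠ 0) {δ φ μ w : H} {ρ R s : ℝ}
    (hδ : dt⁻¹ • δ = -(G μ)) (hμ : μ = L φ + (R / s) • w)
    (hρ : ρ / dt = (1 / (2 * s)) * ⟪w, dt⁻¹ • δ⟫) :
    ⟪L δ, φ⟫ + 2 * ρ * R = -dt * ⟪G μ, μ⟫ := by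
  have hδ' : δ = (-dt) • G μ := by
    rw [inv_smul_eq_iff₀ hdt] at hδ
    rw [hδ, smul_neg, neg_smul]
  have hρ' : ρ = (1 / (2 * s)) * ⟪w, δ⟫ := by
    rw [real_inner_smul_right, div_eq_iff hdt] at hρ
    rw [hρ]
    field_simp
  have hLδ : ⟪L δ, φ⟫ = ⟪δ, L φ⟫ := hL δ φ
  calc ⟪L δ, φ⟫ + 2 * ρ * R = ⟪δ, μ⟫ := by
        rw [hμ, inner_add_right, real_inner_smul_right, real_inner_comm w δ, hρ', hLδ]
        ring
    _ = -dt * ⟪G μ, μ⟫ := by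
        rw [hδ', real_inner_smul_left]

end

theorem sav_bdf2_unconditional_stability_general
    {H : Type*} [NormedAddCommGroup H] [InnerProductSpace ℝ H]
    (L G : H →L[ℝ] H)
    (hLsym : ∀ u v : H, ⟪L u, v⟫ = ⟪u, L v⟫)
    (hLpos : ∀ v : H, 0 ≤ ⟪L v, v⟫)
    (hGpos : ∀ v : H, 0 ≤ ⟪G v, v⟫)
    (dt : ℝ) (hdt : 0 < dt)
    (φnm1 φn φn1 μ w : H) (Rnm1 Rn Rn1 E1 : ℝ)
    (h1 : dt⁻¹ • ((3/2 : ℝ) • φn1 - (2 : ℝ) • φn + (1/2 : ℝ) • φnm1) = -(G μ))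
    (h2 : μ = L φn1 + (Rn1 / Real.sqrt E1) • w)
    (h3 : ((3/2) * Rn1 - 2 * Rn + (1/2) * Rnm1) / dt
        = (1 / (2 * Real.sqrt E1))
          * ⟪w, dt⁻¹ • ((3/2 : ℝ) • φn1 - (2 : ℝ) • φn + (1/2 : ℝ) • φnm1)⟫) :
    ((1/4) * (⟪L φn1, φn1⟫ + ⟪L ((2:ℝ) • φn1 - φn), (2:ℝ) • φn1 - φn⟫)
        + (1/2) * (Rn1 ^ 2 + (2 * Rn1 - Rn) ^ 2))
      - ((1/4) * (⟪L φn, φn⟫ + ⟪L ((2:ℝ) • φn - φnm1), (2:ℝ) • φn - φnm1⟫)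
        + (1/2) * (Rn ^ 2 + (2 * Rn - Rnm1) ^ 2))
      = -dt * ⟪G μ, μ⟫
        - (1/4) * ⟪L (φn1 - (2:ℝ) • φn + φnm1), φn1 - (2:ℝ) • φn + φnm1⟫
        - (1/2) * (Rn1 - 2 * Rn + Rnm1) ^ 2 ∧
    -dt * ⟪G μ, μ⟫
        - (1/4) * ⟪L (φn1 - (2:ℝ) • φn + φnm1), φn1 - (2:ℝ) • φn + φnm1⟫
        - (1/2) * (Rn1 - 2 * Rn + Rnm1) ^ 2 ≤ 0 := by
  have hL : (L : H →ₗ[ℝ] H).IsSymmetric := hLsym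
  have hstep := sav_discrete_energy_law hL hdt.ne' h1 h2 h3
  have hφ := hL.bdf2_energy_sub φn1 φn φnm1
  have hR := bdf2_energy_sub_real Rn1 Rn Rnm1
  simp only [ContinuousLinearMap.coe_coe] at hφ
  refine ⟨by linarith, ?_⟩
  have hGμ : 0 ≤ dt * ⟪G μ, μ⟫ := mul_nonneg hdt.le (hGpos μ)
  linarith [hLpos (φn1 - (2:ℝ) • φn + φnm1), sq_nonneg (Rn1 - 2 * Rn + Rnm1)]

/-- Unconditional energy stability of the second-order BDF2 SAV scheme
(k = 2 case of scheme (2.2)). -/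
theorem sav_bdf2_unconditional_stability
    {H : Type*} [NormedAddCommGroup H] [InnerProductSpace ℝ H]
    (L G : H →L[ℝ] H)
    (hLsym : ∀ u v : H, ⟪L u, v⟫ = ⟪u, L v⟫)
    (hLpos : ∀ v : H, 0 ≤ ⟪L v, v⟫)
    (hGpos : ∀ v : H, 0 ≤ ⟪G v, v⟫)
    (dt : ℝ) (hdt : 0 < dt)
    (φnm1 φn φn1 μ w : H) (Rnm1 Rn Rn1 E1 : ℝ) (hE1 : 0 < E1)
    (h1 : dt⁻¹ • ((3/2 : ℝ) • φn1 - (2 : ℝ) • φn + (1/2 : ℝ) • φnm1) = -(G μ))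
    (h2 : μ = L φn1 + (Rn1 / Real.sqrt E1) • w)
    (h3 : ((3/2) * Rn1 - 2 * Rn + (1/2) * Rnm1) / dt
        = (1 / (2 * Real.sqrt E1))
          * ⟪w, dt⁻¹ • ((3/2 : ℝ) • φn1 - (2 : ℝ) • φn + (1/2 : ℝ) • φnm1)⟫) :
    ((1/4) * (⟪L φn1, φn1⟫ + ⟪L ((2:ℝ) • φn1 - φn), (2:ℝ) • φn1 - φn⟫)
        + (1/2) * (Rn1 ^ 2 + (2 * Rn1 - Rn) ^ 2))
      - ((1/4) * (⟪L φn, φn⟫ + ⟪L ((2:ℝ) • φn - φnm1), (2:ℝ) • φn - φnm1⟫)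
        + (1/2) * (Rn ^ 2 + (2 * Rn - Rnm1) ^ 2))
      = -dt * ⟪G μ, μ⟫
        - (1/4) * ⟪L (φn1 - (2:ℝ) • φn + φnm1), φn1 - (2:ℝ) • φn + φnm1⟫
        - (1/2) * (Rn1 - 2 * Rn + Rnm1) ^ 2 ∧
    -dt * ⟪G μ, μ⟫
        - (1/4) * ⟪L (φn1 - (2:ℝ) • φn + φnm1), φn1 - (2:ℝ) • φn + φnm1⟫
        - (1/2) * (Rn1 - 2 * Rn + Rnm1) ^ 2 ≤ 0 :=
  sav_bdf2_unconditional_stability_general L G hLsym hLpos hGpos dt hdt φnm1 φn φn1 μ w Rnm1 Rn Rn1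
    E1 h1 h2 h3
end
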